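/- arXiv:2105.13438 — 4 statements merged into one kernel-verified Lean document; each statement's English description precedes it below -/
import Mathlib

section
/- For a graph G with no isolated vertex, ∂_{2p}(G) = ρ(G)·(Δ(G) - 1) if and only if there exists a maximum 2-packing S such that every vertex of S has degree Δ(G). -/
/-!
In a 2-packing `S` the neighbourhoods of the vertices are pairwise disjoint and avoid `S`, so
`∂(S) = ∑_{v ∈ S} (deg v - 1) ≤ |S| (Δ - 1) ≤ ρ (Δ - 1)`, where the last step uses `Δ ≥ 1`,
which holds as soon as there is a vertex. Equality in the first bound means that every vertex
of `S` has degree `Δ`; equality in the second means `|S| = ρ`, unless `Δ = 1`, in which case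
`G` is `1`-regular and every maximum 2-packing will do.
-/

open Finset

variable {V : Type*}

/-- `S` is a 2-packing: closed neighbourhoods of distinct vertices of `S` are disjoint. -/
def IsPacking2 (G : SimpleGraph V) (S : Finset V) : Prop :=
  (S : Set V).Pairwise fun u v =>
    Disjoint (G.neighborSet u ∪ {u}) (G.neighborSet v ∪ {v})

/-- The external neighbourhood of `S`: vertices outside `S` with a neighbour in `S`. -/
def extN (G : SimpleGraph V) [Fintype V] [DecidableEq V] [DecidableRel G.Adj]
    (S : Finset V) : Finset V :=
  Finset.univ.filter fun v => v ∉ S ∧ ∃ u ∈ S, G.Adj u v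

/-- The differential of a set `S`: `|N_e(S)| - |S|`. -/
def diffSet (G : SimpleGraph V) [Fintype V] [DecidableEq V] [DecidableRel G.Adj]
    (S : Finset V) : ℤ :=
  ((extN G S).card : ℤ) - S.card

/-- The 2-packing differential of `G`. -/
noncomputable def pdiff2 (G : SimpleGraph V) [Fintype V] [DecidableEq V]
    [DecidableRel G.Adj] : ℤ :=
  sSup {d : ℤ | ∃ S : Finset V, IsPacking2 G S ∧ d = diffSet G S}

/-- The packing number of `G`: maximum cardinality of a 2-packing. -/
noncomputable def packNum (G : SimpleGraph V) [Fintype V] : ℕ :=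
  sSup {n : ℕ | ∃ S : Finset V, IsPacking2 G S ∧ n = S.card}

/-- `G` has no isolated vertex. -/
def NoIsolated (G : SimpleGraph V) : Prop := ∀ v : V, ∃ u, G.Adj v u

/-- `S` is a dominating set of `G`. -/
def IsDom (G : SimpleGraph V) (S : Finset V) : Prop :=
  ∀ v, v ∉ S → ∃ u ∈ S, G.Adj u v

lemma IsPacking2.notMem_of_adj {G : SimpleGraph V} {S : Finset V} (hS : IsPacking2 G S)
    {u v : V} (hu : u ∈ S) (hadj : G.Adj u v) : v ∉ S := fun hv =>
  Set.disjoint_left.mp (hS hu hv hadj.ne) (Set.mem_union_left _ hadj) (Set.mem_union_right _ rfl)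

section NoIsolated

variable [Fintype V] {G : SimpleGraph V} [DecidableRel G.Adj]

lemma NoIsolated.degree_pos (h : NoIsolated G) (v : V) : 0 < G.degree v :=
  (G.degree_pos_iff_exists_adj v).mpr (h v)

lemma NoIsolated.one_le_maxDegree (h : NoIsolated G) (v : V) : 1 ≤ G.maxDegree :=
  (h.degree_pos v).trans_le (G.degree_le_maxDegree v)

end NoIsolated

section PackingNumber

variable [Fintype V] (G : SimpleGraph V)

lemma exists_card_eq_packNum : ∃ S : Finset V, IsPacking2 G S ∧ #S = packNum G := by
  obtain ⟨S, hS, hcard⟩ := Nat.sSup_mem (s := {n | ∃ S : Finset V, IsPacking2 G S ∧ n = #S})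
    ⟨0, ∅, by simp [IsPacking2]⟩ ⟨Fintype.card V, by rintro _ ⟨S, -, rfl⟩; exact card_le_univ S⟩
  exact ⟨S, hS, hcard.symm⟩

lemma card_le_packNum {S : Finset V} (hS : IsPacking2 G S) : #S ≤ packNum G :=
  le_csSup ⟨Fintype.card V, by rintro _ ⟨S, -, rfl⟩; exact card_le_univ S⟩ ⟨S, hS, rfl⟩

variable [DecidableRel G.Adj]

lemma card_mul_le_packNum_mul (h : NoIsolated G) {S : Finset V} (hS : IsPacking2 G S) :
    #S * ((G.maxDegree : ℤ) - 1) ≤ packNum G * ((G.maxDegree : ℤ) - 1) := by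
  obtain hlt | heq := (card_le_packNum G hS).lt_or_eq
  · obtain ⟨T, -, hT⟩ := exists_card_eq_packNum G
    obtain ⟨v, -⟩ : T.Nonempty := card_pos.mp (hT ▸ Nat.zero_lt_of_lt hlt)
    have := h.one_le_maxDegree v
    gcongr
    omega
  · rw [heq]

end PackingNumber

section Packing

variable [Fintype V] [DecidableEq V] {G : SimpleGraph V} [DecidableRel G.Adj] {S : Finset V}

lemma IsPacking2.extN_eq_biUnion (hS : IsPacking2 G S) :
    extN G S = S.biUnion fun u => G.neighborFinset u := by
  ext v
  simp only [extN, mem_filter, mem_univ, true_and, mem_biUnion, SimpleGraph.mem_neighborFinset]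
  exact ⟨fun ⟨_, hv⟩ => hv, fun ⟨u, hu, huv⟩ => ⟨hS.notMem_of_adj hu huv, u, hu, huv⟩⟩

lemma IsPacking2.card_extN (hS : IsPacking2 G S) : #(extN G S) = ∑ u ∈ S, G.degree u := by
  rw [hS.extN_eq_biUnion, card_biUnion]
  · rfl
  intro u hu v hv huv
  rw [Function.onFun, disjoint_left]
  intro w hwu hwv
  exact Set.disjoint_left.mp (hS hu hv huv) (Set.mem_union_left _ (by simpa using hwu))
    (Set.mem_union_left _ (by simpa using hwv))

lemma IsPacking2.diffSet_eq_sum (hS : IsPacking2 G S) :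
    diffSet G S = ∑ u ∈ S, ((G.degree u : ℤ) - 1) := by
  rw [diffSet, hS.card_extN, sum_sub_distrib, sum_const, nsmul_one]
  push_cast
  rfl

lemma IsPacking2.diffSet_le (hS : IsPacking2 G S) :
    diffSet G S ≤ #S * ((G.maxDegree : ℤ) - 1) := by
  rw [hS.diffSet_eq_sum, ← nsmul_eq_mul, ← sum_const]
  gcongr with u
  exact_mod_cast G.degree_le_maxDegree u

lemma IsPacking2.diffSet_eq_iff (hS : IsPacking2 G S) :
    diffSet G S = #S * ((G.maxDegree : ℤ) - 1) ↔ ∀ v ∈ S, G.degree v = G.maxDegree := by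
  rw [hS.diffSet_eq_sum, ← nsmul_eq_mul, ← sum_const,
    sum_eq_sum_iff_of_le fun u _ => by gcongr; exact_mod_cast G.degree_le_maxDegree u]
  simp only [sub_left_inj, Nat.cast_inj]

variable (G)

lemma bddAbove_diffSet_packings :
    BddAbove {d : ℤ | ∃ S : Finset V, IsPacking2 G S ∧ d = diffSet G S} := by
  refine ⟨Fintype.card V, ?_⟩
  rintro _ ⟨S, -, rfl⟩
  have := card_le_univ (extN G S)
  rw [diffSet]
  omega

lemma exists_diffSet_eq_pdiff2 : ∃ S : Finset V, IsPacking2 G S ∧ pdiff2 G = diffSet G S :=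
  Int.csSup_mem (s := {d | ∃ S : Finset V, IsPacking2 G S ∧ d = diffSet G S})
    ⟨_, ∅, by simp [IsPacking2], rfl⟩ (bddAbove_diffSet_packings G)

lemma diffSet_le_pdiff2 (hS : IsPacking2 G S) : diffSet G S ≤ pdiff2 G :=
  le_csSup (bddAbove_diffSet_packings G) ⟨S, hS, rfl⟩

lemma pdiff2_le (h : NoIsolated G) : pdiff2 G ≤ packNum G * ((G.maxDegree : ℤ) - 1) := by
  obtain ⟨T, hT, hpdiff⟩ := exists_diffSet_eq_pdiff2 G
  exact hpdiff ▸ hT.diffSet_le.trans (card_mul_le_packNum_mul G h hT)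

end Packing

theorem stmt3 {V : Type*} [Fintype V] [DecidableEq V] (G : SimpleGraph V)
    [DecidableRel G.Adj] (h : NoIsolated G) :
    pdiff2 G = (packNum G : ℤ) * ((G.maxDegree : ℤ) - 1) ↔
      ∃ S : Finset V, IsPacking2 G S ∧ S.card = packNum G ∧
        ∀ v ∈ S, G.degree v = G.maxDegree := by
  constructor
  · intro heq
    obtain ⟨T, hT, hpdiff⟩ := exists_diffSet_eq_pdiff2 G
    have hcard := card_mul_le_packNum_mul G h hT
    have hdiff := hT.diffSet_le
    by_cases hΔ : G.maxDegree = 1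
    · obtain ⟨S, hS, hS_card⟩ := exists_card_eq_packNum G
      refine ⟨S, hS, hS_card, fun v _ => ?_⟩
      have := h.degree_pos v
      have := G.degree_le_maxDegree v
      omega
    · have hΔ' : (G.maxDegree : ℤ) - 1 ≠ 0 := by omega
      refine ⟨T, hT, ?_, hT.diffSet_eq_iff.mp (by linarith)⟩
      exact_mod_cast mul_right_cancel₀ hΔ' (le_antisymm hcard (by linarith))
  · rintro ⟨S, hS, hS_card, hdeg⟩
    refine (pdiff2_le G h).antisymm ?_
    rw [← hS_card, ← hS.diffSet_eq_iff.mpr hdeg]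
    exact diffSet_le_pdiff2 G hS
end

section
/- If G is a k-regular efficient closed domination graph (i.e., G has a dominating set that is also a 2-packing) with k ≥ 1, then ∂_{2p}(G) = (k-1)·n(G)/(k+1), where n(G) is the order of G. -/
open Finset

variable {V : Type*}

/-!
The closed neighbourhoods of a 2-packing `S` in a `k`-regular graph are disjoint sets of size
`k + 1`, and `N_e(S)` is their union minus `S`. Hence `|N_e(S)| - |S| = (k - 1)|S|` and
`(k + 1)|S| ≤ n`, with equality when `S` dominates. For `k ≥ 1` the differential therefore grows
with `|S|` and is maximised by an efficient dominating set, which has exactly `n / (k + 1)` vertices.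
-/

namespace IsPacking2

variable [Fintype V] [DecidableEq V] {G : SimpleGraph V} [DecidableRel G.Adj] {S : Finset V}

theorem pairwiseDisjoint_closedNbhd (hS : IsPacking2 G S) :
    (S : Set V).PairwiseDisjoint fun u => insert u (G.neighborFinset u) := by
  intro u hu v hv huv
  rw [Function.onFun, ← Finset.disjoint_coe, coe_insert, coe_insert,
    SimpleGraph.coe_neighborFinset, SimpleGraph.coe_neighborFinset, Set.insert_eq, Set.insert_eq,
    Set.union_comm {u}, Set.union_comm {v}]
  exact hS hu hv huv

theorem extN_eq_biUnion_s5 (hS : IsPacking2 G S) :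
    extN G S = S.biUnion fun u => G.neighborFinset u := by
  ext v
  simp only [extN, mem_filter, mem_univ, true_and, mem_biUnion, SimpleGraph.mem_neighborFinset]
  refine ⟨fun ⟨_, hv⟩ => hv, fun ⟨u, hu, huv⟩ => ⟨fun hv => ?_, u, hu, huv⟩⟩
  exact Finset.disjoint_left.mp (hS.pairwiseDisjoint_closedNbhd hu hv huv.ne)
    (mem_insert_of_mem (by simpa using huv)) (mem_insert_self v _)

variable {k : ℕ}

theorem card_extN_s5 (hreg : G.IsRegularOfDegree k) (hS : IsPacking2 G S) :
    #(extN G S) = k * #S := by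
  rw [hS.extN_eq_biUnion_s5, card_biUnion, sum_const_nat fun u _ => ?_, mul_comm]
  · rw [SimpleGraph.card_neighborFinset_eq_degree, hreg u]
  · exact hS.pairwiseDisjoint_closedNbhd.mono fun u => subset_insert u _

theorem diffSet_eq (hreg : G.IsRegularOfDegree k) (hS : IsPacking2 G S) :
    diffSet G S = ((k : ℤ) - 1) * #S := by
  rw [diffSet, hS.card_extN_s5 hreg]
  push_cast
  ring

theorem card_biUnion_closedNbhd (hreg : G.IsRegularOfDegree k) (hS : IsPacking2 G S) :
    #(S.biUnion fun u => insert u (G.neighborFinset u)) = (k + 1) * #S := by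
  rw [card_biUnion hS.pairwiseDisjoint_closedNbhd, sum_const_nat fun u _ => ?_, mul_comm]
  rw [card_insert_of_notMem (by simp), SimpleGraph.card_neighborFinset_eq_degree, hreg u]

theorem succ_mul_card_le (hreg : G.IsRegularOfDegree k) (hS : IsPacking2 G S) :
    (k + 1) * #S ≤ Fintype.card V :=
  hS.card_biUnion_closedNbhd hreg ▸ card_le_univ _

theorem succ_mul_card_eq_of_isDom (hreg : G.IsRegularOfDegree k) (hS : IsPacking2 G S)
    (hD : IsDom G S) : (k + 1) * #S = Fintype.card V := by
  rw [← hS.card_biUnion_closedNbhd hreg, ← card_univ]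
  congr
  refine eq_univ_of_forall fun v => mem_biUnion.mpr ?_
  by_cases hv : v ∈ S
  · exact ⟨v, hv, mem_insert_self v _⟩
  · obtain ⟨u, hu, huv⟩ := hD v hv
    exact ⟨u, hu, mem_insert_of_mem (by simpa using huv)⟩

end IsPacking2

theorem pdiff2_eq_of_isDom [Fintype V] [DecidableEq V] {G : SimpleGraph V} [DecidableRel G.Adj]
    {k : ℕ} (hk : 1 ≤ k) (hreg : G.IsRegularOfDegree k) {S₀ : Finset V} (hS₀ : IsPacking2 G S₀)
    (hD₀ : IsDom G S₀) : pdiff2 G = ((k : ℤ) - 1) * #S₀ := by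
  refine IsGreatest.csSup_eq ⟨⟨S₀, hS₀, (hS₀.diffSet_eq hreg).symm⟩, ?_⟩
  rintro _ ⟨S, hS, rfl⟩
  have hcard : #S ≤ #S₀ := Nat.le_of_mul_le_mul_left
    ((hS.succ_mul_card_le hreg).trans (hS₀.succ_mul_card_eq_of_isDom hreg hD₀).ge) k.succ_pos
  rw [hS.diffSet_eq hreg]
  gcongr
  omega

theorem stmt5 {V : Type*} [Fintype V] [DecidableEq V] (G : SimpleGraph V)
    [DecidableRel G.Adj] (k : ℕ) (hk : 1 ≤ k) (hreg : G.IsRegularOfDegree k)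
    (heff : ∃ S : Finset V, IsPacking2 G S ∧ IsDom G S) :
    (pdiff2 G : ℚ) = ((k : ℚ) - 1) * (Fintype.card V) / ((k : ℚ) + 1) := by
  obtain ⟨S₀, hS₀, hD₀⟩ := heff
  have hn : ((k : ℚ) + 1) * #S₀ = Fintype.card V := by
    exact_mod_cast hS₀.succ_mul_card_eq_of_isDom hreg hD₀
  rw [pdiff2_eq_of_isDom hk hreg hS₀ hD₀, ← hn]
  push_cast
  field_simp
end

section
/- Let G be a graph with no isolated vertex. If k ∈ {1,2,3} and Δ(G) = n(G) - k, then ∂_{2p}(G) = n(G) - k - 1. -/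
open Finset

variable {V : Type*}

/-!
A vertex of maximum degree is a 2-packing of differential `Δ - 1`, and nothing beats it:
the empty set has differential `0 ≤ Δ - 1`, a singleton `{u}` has `deg u - 1 ≤ Δ - 1`, and a set
`S` with `|S| ≥ 2` has at most `n - |S|` external neighbours, hence differential at most
`n - 4 ≤ Δ - 1` as soon as `n - Δ ≤ 3`.
-/

namespace SimpleGraph

theorem isPacking2_singleton (G : SimpleGraph V) (u : V) : IsPacking2 G {u} := by
  rw [IsPacking2, coe_singleton]
  exact Set.pairwise_singleton _ _

section Differential

variable [Fintype V] [DecidableEq V] (G : SimpleGraph V) [DecidableRel G.Adj]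

@[simp]
theorem extN_empty : extN G ∅ = ∅ := by
  ext w
  simp [extN]

@[simp]
theorem extN_singleton (u : V) : extN G {u} = G.neighborFinset u := by
  ext w
  simp only [extN, mem_filter, mem_univ, true_and, mem_singleton, exists_eq_left,
    mem_neighborFinset, and_iff_right_iff_imp]
  exact fun hadj hwu => G.loopless.irrefl u (hwu ▸ hadj)

theorem extN_subset_compl (S : Finset V) : extN G S ⊆ Sᶜ := fun _ hw =>
  mem_compl.mpr (mem_filter.mp hw).2.1

@[simp]
theorem diffSet_empty : diffSet G ∅ = 0 := by
  simp [diffSet]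

theorem diffSet_singleton (u : V) : diffSet G {u} = G.degree u - 1 := by
  simp [diffSet]

theorem diffSet_le_card_sub_two_mul (S : Finset V) :
    diffSet G S ≤ Fintype.card V - 2 * S.card := by
  have hext : (extN G S).card ≤ Fintype.card V - S.card :=
    (card_le_card (extN_subset_compl G S)).trans_eq (card_compl S)
  have hS : S.card ≤ Fintype.card V := card_le_univ S
  simp only [diffSet]
  omega

theorem diffSet_le_maxDegree_sub_one (hΔ : 1 ≤ G.maxDegree)
    (hn : Fintype.card V ≤ G.maxDegree + 3) (S : Finset V) :
    diffSet G S ≤ G.maxDegree - 1 := by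
  obtain hS | hS := Nat.lt_or_ge S.card 2
  · interval_cases hcard : S.card
    · rw [card_eq_zero.mp hcard, diffSet_empty]
      omega
    · obtain ⟨u, rfl⟩ := card_eq_one.mp hcard
      have := G.degree_le_maxDegree u
      rw [diffSet_singleton]
      omega
  · have := diffSet_le_card_sub_two_mul G S
    omega

theorem pdiff2_eq_of_isGreatest {m : ℤ}
    (hm : IsGreatest {d : ℤ | ∃ S : Finset V, IsPacking2 G S ∧ d = diffSet G S} m) :
    pdiff2 G = m :=
  hm.csSup_eq

theorem pdiff2_eq_maxDegree_sub_one [Nonempty V] (hΔ : 1 ≤ G.maxDegree)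
    (hn : Fintype.card V ≤ G.maxDegree + 3) : pdiff2 G = G.maxDegree - 1 := by
  obtain ⟨v, hv⟩ := G.exists_maximal_degree_vertex
  refine G.pdiff2_eq_of_isGreatest ⟨⟨{v}, G.isPacking2_singleton v, ?_⟩, ?_⟩
  · rw [diffSet_singleton, hv]
  · rintro d ⟨S, -, rfl⟩
    exact G.diffSet_le_maxDegree_sub_one hΔ hn S

end Differential

end SimpleGraph

theorem NoIsolated.one_le_maxDegree_s14 [Fintype V] [Nonempty V] {G : SimpleGraph V}
    [DecidableRel G.Adj] (hG : NoIsolated G) : 1 ≤ G.maxDegree := by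
  obtain ⟨v⟩ := ‹Nonempty V›
  obtain ⟨u, hu⟩ := hG v
  calc 1 ≤ G.degree v := card_pos.mpr ⟨u, (G.mem_neighborFinset v u).mpr hu⟩
    _ ≤ G.maxDegree := G.degree_le_maxDegree v

theorem stmt14 {V : Type*} [Fintype V] [DecidableEq V] (G : SimpleGraph V)
    [DecidableRel G.Adj] (h : NoIsolated G) (k : ℕ) (hk : k ∈ ({1, 2, 3} : Set ℕ))
    (hΔ : (G.maxDegree : ℤ) = (Fintype.card V : ℤ) - k) :
    pdiff2 G = (Fintype.card V : ℤ) - k - 1 := by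
  obtain ⟨hk1, hk3⟩ : 1 ≤ k ∧ k ≤ 3 := by
    rcases hk with rfl | rfl | rfl <;> simp
  have : Nonempty V := Fintype.card_pos_iff.mp (by omega)
  rw [G.pdiff2_eq_maxDegree_sub_one h.one_le_maxDegree_s14 (by omega), hΔ]
end

section
/- For any graph G, the unique response Roman domination number and the 2-packing differential satisfy the Gallai-type identity μ_R(G) + ∂_{2p}(G) = n(G). -/
open Finset

variable {V : Type*}

/-- `f` is a unique response Roman dominating function on `G`. -/
def IsURRDF (G : SimpleGraph V) (f : V → Fin 3) : Prop :=
  (∀ v, f v = 0 → ∃! u, G.Adj u v ∧ f u = 2) ∧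
    (∀ v, f v ≠ 0 → ∀ u, G.Adj u v → f u ≠ 2)

/-- The unique response Roman domination number of `G`. -/
noncomputable def urrdNum (G : SimpleGraph V) [Fintype V] : ℕ :=
  sInf {w : ℕ | ∃ f : V → Fin 3, IsURRDF G f ∧ w = ∑ v : V, (f v).val}

/-!
A unique response Roman dominating function `f` is determined by `V₂ = f⁻¹(2)`: this set is a
2-packing, `V₀` is its external neighbourhood and `V₁` is everything else. Conversely every 2-packing
`S` arises this way, with weight `2|S| + (n - |S| - |N_e(S)|) = n - ∂(S)`. Minimising the weight is
therefore the same as maximising the differential over 2-packings.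
-/

section Packing

variable {G : SimpleGraph V} {S : Finset V}

theorem isPacking2_iff :
    IsPacking2 G S ↔
      ∀ u ∈ S, ∀ v ∈ S, u ≠ v → ¬G.Adj u v ∧ ∀ w, G.Adj u w → ¬G.Adj v w := by
  simp only [IsPacking2, Set.Pairwise, Finset.mem_coe, Set.disjoint_left, Set.mem_union,
    SimpleGraph.mem_neighborSet, Set.mem_singleton_iff]
  refine forall₂_congr fun u _ => forall₂_congr fun v _ => imp_congr_right fun huv => ?_
  refine ⟨fun h => ⟨fun hadj => h (.inl hadj) (.inr rfl), fun w huw hvw => h (.inl huw) (.inl hvw)⟩,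
    ?_⟩
  rintro ⟨hnadj, hcommon⟩ w (huw | rfl) (hvw | rfl)
  exacts [hcommon w huw hvw, hnadj huw, hnadj hvw.symm, huv rfl]

theorem IsPacking2.eq_of_adj (hS : IsPacking2 G S) {u u' v : V} (hu : u ∈ S) (hu' : u' ∈ S)
    (huv : G.Adj u v) (hu'v : G.Adj u' v) : u = u' :=
  by_contra fun hne => (isPacking2_iff.mp hS u hu u' hu' hne).2 v huv hu'v

theorem IsPacking2.not_adj (hS : IsPacking2 G S) {u v : V} (hu : u ∈ S) (hv : v ∈ S) :
    ¬G.Adj u v := fun huv => (isPacking2_iff.mp hS u hu v hv huv.ne).1 huv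

theorem IsURRDF.isPacking2 [Fintype V] {f : V → Fin 3} (hf : IsURRDF G f) :
    IsPacking2 G (Finset.univ.filter (f · = 2)) := by
  have h2 : (2 : Fin 3) ≠ 0 := by decide
  simp only [isPacking2_iff, Finset.mem_filter, Finset.mem_univ, true_and]
  refine fun u hu v hv huv => ⟨fun hadj => hf.2 v (hv ▸ h2) u hadj hu, fun w huw hvw => ?_⟩
  by_cases hw : f w = 0
  · exact huv ((hf.1 w hw).unique ⟨huw, hu⟩ ⟨hvw, hv⟩)
  · exact hf.2 w hw u huw hu

end Packing

section Correspondence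

variable [Fintype V] [DecidableEq V] (G : SimpleGraph V) [DecidableRel G.Adj]

theorem mem_extN {S : Finset V} {v : V} : v ∈ extN G S ↔ v ∉ S ∧ ∃ u ∈ S, G.Adj u v := by
  simp [extN]

def packingURRDF (S : Finset V) (v : V) : Fin 3 :=
  if v ∈ S then 2 else if v ∈ extN G S then 0 else 1

variable {G}

theorem packingURRDF_eq_two_iff {S : Finset V} {v : V} : packingURRDF G S v = 2 ↔ v ∈ S := by
  unfold packingURRDF
  split_ifs <;> simp_all

theorem packingURRDF_eq_zero_iff {S : Finset V} {v : V} :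
    packingURRDF G S v = 0 ↔ v ∈ extN G S := by
  unfold packingURRDF
  split_ifs with hS hN <;> simp_all [mem_extN]

theorem IsPacking2.isURRDF {S : Finset V} (hS : IsPacking2 G S) :
    IsURRDF G (packingURRDF G S) := by
  simp only [IsURRDF, ne_eq, packingURRDF_eq_two_iff, packingURRDF_eq_zero_iff, mem_extN]
  refine ⟨fun v ⟨_, u, hu, huv⟩ => ⟨u, ⟨huv, hu⟩, fun u' ⟨hu'v, hu'⟩ =>
    hS.eq_of_adj hu' hu hu'v huv⟩, fun v hv u huv hu => ?_⟩
  by_cases hvS : v ∈ S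
  · exact hS.not_adj hu hvS huv
  · exact hv ⟨hvS, u, hu, huv⟩

theorem weight_packingURRDF (S : Finset V) :
    ((∑ v, (packingURRDF G S v).val : ℕ) : ℤ) = Fintype.card V - diffSet G S := by
  have hpoint : ∀ v, ((packingURRDF G S v).val : ℤ) =
      1 + (if v ∈ S then 1 else 0) - (if v ∈ extN G S then 1 else 0) := by
    intro v
    unfold packingURRDF
    by_cases hvS : v ∈ S
    · simp [hvS, mem_extN]
    · by_cases hvN : v ∈ extN G S <;> simp [hvS, hvN]
  push_cast
  simp only [hpoint, Finset.sum_add_distrib, Finset.sum_sub_distrib, Finset.sum_boole,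
    Finset.filter_mem_eq_inter, Finset.univ_inter, Finset.sum_const, Finset.card_univ,
    Int.nsmul_eq_mul, mul_one, diffSet]
  ring

variable {f : V → Fin 3}

theorem IsURRDF.eq_packingURRDF (hf : IsURRDF G f) :
    f = packingURRDF G (Finset.univ.filter (f · = 2)) := by
  funext v
  have hN : v ∈ extN G (Finset.univ.filter (f · = 2)) ↔ f v = 0 := by
    simp only [mem_extN, Finset.mem_filter, Finset.mem_univ, true_and]
    constructor
    · rintro ⟨-, u, hu, huv⟩
      exact by_contra fun hv => hf.2 v hv u huv hu
    · intro hv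
      obtain ⟨u, ⟨huv, hu⟩, -⟩ := hf.1 v hv
      exact ⟨by simp [hv], u, hu, huv⟩
  unfold packingURRDF
  simp only [hN, Finset.mem_filter, Finset.mem_univ, true_and]
  generalize f v = a
  fin_cases a <;> decide

theorem IsURRDF.weight_eq (hf : IsURRDF G f) :
    ((∑ v, (f v).val : ℕ) : ℤ) = Fintype.card V - diffSet G (Finset.univ.filter (f · = 2)) := by
  have h := weight_packingURRDF (G := G) (Finset.univ.filter (f · = 2))
  rwa [← hf.eq_packingURRDF] at h

end Correspondence

theorem stmt18 {V : Type*} [Fintype V] [DecidableEq V] (G : SimpleGraph V)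
    [DecidableRel G.Adj] :
    (urrdNum G : ℤ) + pdiff2 G = (Fintype.card V : ℤ) := by
  obtain ⟨f₀, hf₀, hw₀⟩ : urrdNum G ∈ _ :=
    Nat.sInf_mem ⟨_, _, (by simp [IsPacking2] : IsPacking2 G ∅).isURRDF, rfl⟩
  have hmax : IsGreatest {d : ℤ | ∃ S : Finset V, IsPacking2 G S ∧ d = diffSet G S}
      (diffSet G (Finset.univ.filter (f₀ · = 2))) := by
    refine ⟨⟨_, hf₀.isPacking2, rfl⟩, ?_⟩
    rintro _ ⟨S, hS, rfl⟩
    have hle : (urrdNum G : ℤ) ≤ ((∑ v, (packingURRDF G S v).val : ℕ) : ℤ) :=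
      Nat.cast_le.mpr (Nat.sInf_le ⟨_, hS.isURRDF, rfl⟩)
    rw [weight_packingURRDF, hw₀, hf₀.weight_eq] at hle
    linarith
  rw [pdiff2, hmax.csSup_eq, hw₀, hf₀.weight_eq]
  ring
end
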